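/- Let K be a field, α ∈ K((T⁻¹)), and A, B ∈ K[T] coprime non-zero polynomials; let β = (A/B)·α. Then α is badly approximable if and only if β is badly approximable, and in that case K(α) − deg(AB) ≤ K(β) ≤ K(α) + deg(AB). -/

import Mathlib

/-!
A bound `K(α) ≤ C` is equivalent to the Diophantine condition
`ord (q α - p) ≤ deg q + C` for all `p, q` with `q ≠ 0` and `q α ≠ p`. The convergents give one
direction, since `ord (qₙ α - pₙ) = deg qₙ₊₁ = deg qₙ + deg aₙ₊₁`. For the other, take `N` with
`deg q_N ≤ deg q < deg q_{N+1}`: the polynomial `q_N (q α - p) - q (q_N α - p_N) = q p_N - p q_N`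
is either zero, or it has non-positive order while `q (q_N α - p_N)` has positive order, which
forces `ord (q α - p) ≤ deg q_N`.

The identity `B (q β - p) = (A q) α - B p` transfers the Diophantine condition from `α` to
`β = (A / B) α` with `C` replaced by `C + deg A + deg B`; applied also to `α = (B / A) β` this
gives both bounds.
-/

noncomputable section

namespace PaperCF

variable {K : Type*} [Field K]

/-- The element `T` of `K((T⁻¹))`, where `K((T⁻¹))` is modeled as the field
`LaurentSeries K` of Laurent series in the variable `t = T⁻¹`. -/
def Tvar (K : Type*) [Field K] : LaurentSeries K := (HahnSeries.single (-1 : ℤ) (1 : K))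

/-- The embedding of `K[T]` into `K((T⁻¹))`, sending the polynomial variable to `T = t⁻¹`. -/
def emb : Polynomial K →+* LaurentSeries K := (Polynomial.aeval (Tvar K)).toRingHom

/-- The polynomial part `⌊α⌋` of a formal Laurent series `α ∈ K((T⁻¹))`. -/
def polyPart (α : LaurentSeries K) : Polynomial K :=
  ∑ i ∈ Finset.range ((-α.order).toNat + 1), Polynomial.monomial i (α.coeff (-(i : ℤ)))

/-- The complete quotients `αₙ` of the regular continued fraction expansion of `α`
(with the convention `0⁻¹ = 0`, so that `cq α n = 0` for all `n` past the end of a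
finite expansion). -/
def cq (α : LaurentSeries K) : ℕ → LaurentSeries K
  | 0 => α
  | n + 1 => (cq α n - emb (polyPart (cq α n)))⁻¹

/-- The partial quotients `aₙ = ⌊αₙ⌋` of the regular continued fraction expansion of `α`. -/
def pq (α : LaurentSeries K) (n : ℕ) : Polynomial K := polyPart (cq α n)

/-- The continuants `(pₙ, qₙ)` of the regular continued fraction expansion of `α`. -/
def cont (α : LaurentSeries K) : ℕ → Polynomial K × Polynomial K
  | 0 => (pq α 0, 1)
  | 1 => (pq α 1 * pq α 0 + 1, pq α 1)
  | n + 2 => (pq α (n + 2) * (cont α (n + 1)).1 + (cont α n).1,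
              pq α (n + 2) * (cont α (n + 1)).2 + (cont α n).2)

/-- `pₙ`. -/
def contP (α : LaurentSeries K) (n : ℕ) : Polynomial K := (cont α n).1

/-- `qₙ`. -/
def contQ (α : LaurentSeries K) (n : ℕ) : Polynomial K := (cont α n).2

/-- The `n`-th partial quotient (and hence the `n`-th convergent) of `α` genuinely exists. -/
def ConvAt (α : LaurentSeries K) (n : ℕ) : Prop := n = 0 ∨ cq α n ≠ 0

/-- `K(α) = sup_{n ≥ 1} deg aₙ`, as an extended natural number. -/
def KK (α : LaurentSeries K) : ℕ∞ :=
  ⨆ n : {n : ℕ // 1 ≤ n ∧ cq α n ≠ 0}, ((pq α n.1).natDegree : ℕ∞)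

/-- `ōK(α) = limsup_n deg aₙ`. -/
def KKbar (α : LaurentSeries K) : ℕ∞ :=
  Filter.limsup (fun n => ((pq α n).natDegree : ℕ∞)) Filter.atTop

/-- `α` is a rational function, i.e. an element of `K(T) ⊆ K((T⁻¹))`. -/
def IsRat (α : LaurentSeries K) : Prop :=
  ∃ p q : Polynomial K, q ≠ 0 ∧ α * emb q = emb p

/-- Two Laurent series are equivalent if they differ by a Möbius transformation with
matrix in `GL₂(K[T])`. -/
def MEquiv (α β : LaurentSeries K) : Prop :=
  ∃ a b c d : Polynomial K, IsUnit (a * d - b * c) ∧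
    emb c * α + emb d ≠ 0 ∧ β = (emb a * α + emb b) / (emb c * α + emb d)

open Polynomial HahnSeries

lemma Tvar_pow (n : ℕ) : Tvar K ^ n = single (-(n : ℤ)) (1 : K) := by
  induction n with
  | zero => simp [Tvar]
  | succ n ih =>
    rw [pow_succ, ih, Tvar, single_mul_single]
    norm_num [add_comm]

lemma emb_monomial (n : ℕ) (a : K) : emb (monomial n a) = single (-(n : ℤ)) a := by
  change aeval (Tvar K) (monomial n a) = _
  have hC : algebraMap K (LaurentSeries K) a = single 0 a := by
    simp [HahnSeries.algebraMap_apply']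
  rw [aeval_monomial, Tvar_pow, hC, single_mul_single, zero_add, mul_one]

lemma coeff_emb (p : K[X]) (k : ℤ) :
    (emb p).coeff k = if k ≤ 0 then p.coeff (-k).toNat else 0 := by
  induction p using Polynomial.induction_on' with
  | add f g hf hg =>
    simp only [map_add, HahnSeries.coeff_add, hf, hg, Polynomial.coeff_add]
    split_ifs <;> simp
  | monomial n a =>
    rw [emb_monomial, coeff_single, Polynomial.coeff_monomial]
    split_ifs <;> first | rfl | omega

lemma emb_ne_zero {p : K[X]} (hp : p ≠ 0) : emb p ≠ 0 := by
  intro h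
  have := coeff_emb p (-(p.natDegree : ℤ))
  simp only [h, HahnSeries.coeff_zero, Left.neg_nonpos_iff, Nat.cast_nonneg, if_true, neg_neg,
    Int.toNat_natCast] at this
  exact hp (leadingCoeff_eq_zero.1 this.symm)

lemma order_emb {p : K[X]} (hp : p ≠ 0) : (emb p).order = -(p.natDegree : ℤ) := by
  refine le_antisymm (order_le_of_coeff_ne_zero (by simpa [coeff_emb] using hp))
    ((le_order_iff_forall (emb_ne_zero hp)).2 fun k hk => ?_)
  rw [coeff_emb, if_pos (by omega)]
  exact coeff_eq_zero_of_natDegree_lt (by omega)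

lemma orderTop_emb {p : K[X]} (hp : p ≠ 0) : (emb p).orderTop = ↑(-(p.natDegree : ℤ)) := by
  rw [← order_eq_orderTop_of_ne_zero (emb_ne_zero hp), order_emb hp]

lemma eq_zero_of_orderTop_emb_pos {p : K[X]} (h : 0 < (emb p).orderTop) : p = 0 := by
  by_contra hp
  rw [orderTop_emb hp, ← WithTop.coe_zero, WithTop.coe_lt_coe] at h
  omega

lemma coeff_polyPart (α : LaurentSeries K) (j : ℕ) :
    (polyPart α).coeff j = if j ≤ (-α.order).toNat then α.coeff (-(j : ℤ)) else 0 := by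
  simp only [polyPart, finsetSum_coeff, Polynomial.coeff_monomial,
    Finset.sum_ite_eq', Finset.mem_range, Nat.lt_succ_iff]

lemma polyPart_zero : polyPart (0 : LaurentSeries K) = 0 := by
  simp [polyPart]

lemma orderTop_sub_polyPart_pos (α : LaurentSeries K) :
    0 < (α - emb (polyPart α)).orderTop := by
  refine zero_lt_one.trans_le (le_orderTop_iff_forall.2 fun k hk => ?_)
  have hk : k ≤ 0 := by exact_mod_cast Order.le_of_lt_add_one (by simpa using hk)
  rw [HahnSeries.coeff_sub, coeff_emb, if_pos hk, coeff_polyPart, sub_eq_zero]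
  split_ifs with h
  · congr 1
    omega
  · exact coeff_eq_zero_of_lt_order (by omega)

lemma natDegree_polyPart {α : LaurentSeries K} (hα : α ≠ 0) (h : α.order ≤ 0) :
    (polyPart α).natDegree = (-α.order).toNat := by
  apply natDegree_eq_of_le_of_coeff_ne_zero
  · rw [natDegree_le_iff_coeff_eq_zero]
    intro N hN
    rw [coeff_polyPart, if_neg (by omega)]
  · rw [coeff_polyPart, if_pos le_rfl, show -((-α.order).toNat : ℤ) = α.order by omega]
    exact coeff_order_eq_zero.not.2 hα

variable {α : LaurentSeries K} {m n : ℕ}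

def cqFract (α : LaurentSeries K) (n : ℕ) : LaurentSeries K := cq α n - emb (pq α n)

lemma cq_succ (α : LaurentSeries K) (n : ℕ) : cq α (n + 1) = (cqFract α n)⁻¹ := rfl

lemma cqFract_ne_zero_of_succ (h : cqFract α (n + 1) ≠ 0) : cqFract α n ≠ 0 := by
  contrapose! h
  rw [cqFract, pq, cq_succ, h, inv_zero, polyPart_zero, map_zero, sub_zero]

lemma cqFract_ne_zero_of_le (hmn : m ≤ n) (h : cqFract α n ≠ 0) : cqFract α m ≠ 0 := by
  induction n, hmn using Nat.le_induction with
  | base => exact h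
  | succ n _ ih => exact ih (cqFract_ne_zero_of_succ h)

lemma order_cq_succ (h : cqFract α n ≠ 0) : (cq α (n + 1)).order = -(cqFract α n).order := by
  have := order_mul (inv_ne_zero h) h
  rw [inv_mul_cancel₀ h, order_one, ← cq_succ] at this
  omega

lemma order_cqFract_pos (h : cqFract α n ≠ 0) : 0 < (cqFract α n).order := by
  have : 0 < (cqFract α n).orderTop := orderTop_sub_polyPart_pos (cq α n)
  rwa [← order_eq_orderTop_of_ne_zero h, WithTop.coe_pos] at this

lemma natDegree_pq_succ (h : cqFract α n ≠ 0) :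
    ((pq α (n + 1)).natDegree : ℤ) = (cqFract α n).order := by
  have hpos := order_cqFract_pos h
  have hcq : cq α (n + 1) ≠ 0 := inv_ne_zero h
  rw [pq, natDegree_polyPart hcq (by rw [order_cq_succ h]; omega), order_cq_succ h]
  omega

lemma one_le_natDegree_pq_succ (h : cqFract α n ≠ 0) : 1 ≤ (pq α (n + 1)).natDegree := by
  have := natDegree_pq_succ h
  have := order_cqFract_pos h
  omega

lemma contQ_succ_succ (α : LaurentSeries K) (n : ℕ) :
    contQ α (n + 2) = pq α (n + 2) * contQ α (n + 1) + contQ α n := rfl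

lemma natDegree_contQ_succ (h : cqFract α n ≠ 0) :
    (contQ α (n + 1)).natDegree = (contQ α n).natDegree + (pq α (n + 1)).natDegree := by
  induction n with
  | zero => simp [contQ, cont]
  | succ n ih =>
    have ih := ih (cqFract_ne_zero_of_succ h)
    have h₁ := one_le_natDegree_pq_succ (cqFract_ne_zero_of_succ h)
    have h₂ : 1 ≤ (pq α (n + 2)).natDegree := one_le_natDegree_pq_succ h
    have hq : contQ α (n + 1) ≠ 0 := ne_zero_of_natDegree_gt (n := 0) (by omega)
    have ha : pq α (n + 2) ≠ 0 := ne_zero_of_natDegree_gt (n := 0) (by omega)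
    rw [contQ_succ_succ, natDegree_add_eq_left_of_natDegree_lt, natDegree_mul ha hq, add_comm]
    rw [natDegree_mul ha hq]
    omega

lemma contQ_ne_zero (h : ∀ k < n, cqFract α k ≠ 0) : contQ α n ≠ 0 := by
  cases n with
  | zero => exact one_ne_zero
  | succ n =>
    have hn := h n n.lt_succ_self
    exact ne_zero_of_natDegree_gt (n := 0)
      (by rw [natDegree_contQ_succ hn]; have := one_le_natDegree_pq_succ hn; omega)

lemma le_natDegree_contQ_succ (h : cqFract α n ≠ 0) : n + 1 ≤ (contQ α (n + 1)).natDegree := by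
  induction n with
  | zero => rw [natDegree_contQ_succ h]; exact (one_le_natDegree_pq_succ h).trans le_add_self
  | succ n ih =>
    have := ih (cqFract_ne_zero_of_succ h)
    rw [natDegree_contQ_succ h]
    have := one_le_natDegree_pq_succ h
    omega

def convErr (α : LaurentSeries K) (n : ℕ) : LaurentSeries K :=
  α * emb (contQ α n) - emb (contP α n)

lemma convErr_zero (α : LaurentSeries K) : convErr α 0 = cqFract α 0 := by
  simp [convErr, contQ, contP, cont, cqFract, cq]

lemma cqFract_mul_cqFract_succ (h : cqFract α n ≠ 0) :
    cqFract α n * cqFract α (n + 1) = 1 - emb (pq α (n + 1)) * cqFract α n := by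
  rw [show cqFract α (n + 1) = (cqFract α n)⁻¹ - emb (pq α (n + 1)) from rfl, mul_sub,
    mul_inv_cancel₀ h, mul_comm]

lemma convErr_succ (h : cqFract α n ≠ 0) :
    convErr α (n + 1) = -cqFract α (n + 1) * convErr α n := by
  induction n with
  | zero =>
    have key := cqFract_mul_cqFract_succ h
    simp only [convErr, contQ, contP, cont, cqFract, cq, map_add, map_mul, map_one] at key ⊢
    linear_combination key
  | succ n ih =>
    have ih := ih (cqFract_ne_zero_of_succ h)
    have key := cqFract_mul_cqFract_succ h
    have hrec : convErr α (n + 2) = emb (pq α (n + 2)) * convErr α (n + 1) + convErr α n := by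
      simp only [convErr, contQ_succ_succ, contP, cont, map_add, map_mul]
      ring
    linear_combination hrec + (emb (pq α (n + 2)) + cqFract α (n + 2)) * ih - convErr α n * key

lemma orderTop_cqFract (h : cqFract α n ≠ 0) :
    (cqFract α n).orderTop = ((pq α (n + 1)).natDegree : ℤ) := by
  rw [← order_eq_orderTop_of_ne_zero h, natDegree_pq_succ h]

lemma orderTop_convErr (h : cqFract α n ≠ 0) :
    (convErr α n).orderTop = ((contQ α (n + 1)).natDegree : ℤ) := by
  induction n with
  | zero => simp [convErr_zero, orderTop_cqFract h, contQ, cont]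
  | succ n ih =>
    rw [convErr_succ (cqFract_ne_zero_of_succ h), orderTop_mul, orderTop_neg, orderTop_cqFract h,
      ih (cqFract_ne_zero_of_succ h), natDegree_contQ_succ h, add_comm]
    norm_cast

lemma exists_natDegree_contQ_le_lt (α : LaurentSeries K) (d : ℕ) :
    ∃ N, contQ α N ≠ 0 ∧ (contQ α N).natDegree ≤ d ∧
      (convErr α N = 0 ∨ cqFract α N ≠ 0 ∧ d < (contQ α (N + 1)).natDegree) := by
  classical
  have hex : ∃ N, cqFract α N = 0 ∨ d < (contQ α (N + 1)).natDegree := by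
    by_cases h : cqFract α d = 0
    · exact ⟨d, .inl h⟩
    · exact ⟨d, .inr (le_natDegree_contQ_succ h)⟩
  obtain ⟨hstop, hmin⟩ := (Nat.find_eq_iff hex).1 rfl
  set N := Nat.find hex
  have hpre : ∀ k < N, cqFract α k ≠ 0 := fun k hk => (not_or.1 (hmin k hk)).1
  refine ⟨N, contQ_ne_zero hpre, ?_, ?_⟩
  · cases hN : N with
    | zero => simp [contQ, cont]
    | succ m => simpa [hN] using (not_or.1 (hmin m (by omega))).2
  · by_cases hε : cqFract α N = 0
    · left
      cases hN : N with
      | zero => rw [convErr_zero, ← hN, hε]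
      | succ m => rw [convErr_succ (hpre m (by omega)), ← hN, hε, neg_zero, zero_mul]
    · exact .inr ⟨hε, hstop.resolve_left hε⟩

lemma order_sub_le_of_natDegree_pq_le {C : ℕ}
    (hC : ∀ n, cqFract α n ≠ 0 → (pq α (n + 1)).natDegree ≤ C)
    {p q : K[X]} (hq : q ≠ 0) (hD : α * emb q ≠ emb p) :
    (α * emb q - emb p).order ≤ q.natDegree + C := by
  set D := α * emb q - emb p
  have hD0 : D ≠ 0 := sub_ne_zero.2 hD
  obtain ⟨N, hqN, hdeg, hcase⟩ := exists_natDegree_contQ_le_lt α q.natDegree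
  set W := q * contP α N - p * contQ α N
  have hW : emb (contQ α N) * D - emb q * convErr α N = emb W := by
    simp only [W, D, convErr, map_sub, map_mul]
    ring
  by_cases hW0 : W = 0
  · have heq : emb (contQ α N) * D = emb q * convErr α N := by
      rwa [hW0, map_zero, sub_eq_zero] at hW
    have hR : convErr α N ≠ 0 := by
      intro h
      rw [h, mul_zero] at heq
      exact mul_ne_zero (emb_ne_zero hqN) hD0 heq
    obtain ⟨hε, -⟩ := hcase.resolve_left hR
    have hord := congrArg orderTop heq
    rw [orderTop_mul, orderTop_mul, orderTop_emb hqN, orderTop_emb hq, orderTop_convErr hε,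
      ← order_eq_orderTop_of_ne_zero hD0] at hord
    norm_cast at hord
    have := natDegree_contQ_succ hε
    have := hC N hε
    omega
  · have hpos : 0 < (emb q * convErr α N).orderTop := by
      rcases hcase with h | ⟨hε, hlt⟩
      · simp [h]
      · rw [orderTop_mul, orderTop_emb hq, orderTop_convErr hε]
        norm_cast
        omega
    have hle : (emb (contQ α N) * D).orderTop ≤ 0 := by
      by_contra! h
      exact hW0 (eq_zero_of_orderTop_emb_pos
        (hW ▸ (lt_min h hpos).trans_le min_orderTop_le_orderTop_sub))
    rw [orderTop_mul, orderTop_emb hqN, ← order_eq_orderTop_of_ne_zero hD0] at hle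
    norm_cast at hle
    omega

lemma natDegree_pq_le_of_order_le {C : ℕ}
    (h : ∀ p q : K[X], q ≠ 0 → α * emb q ≠ emb p →
      (α * emb q - emb p).order ≤ q.natDegree + C)
    (hε : cqFract α n ≠ 0) : (pq α (n + 1)).natDegree ≤ C := by
  have hR : convErr α n ≠ 0 := orderTop_ne_top.1 (by simp [orderTop_convErr hε])
  have hord : (convErr α n).order = (contQ α (n + 1)).natDegree := by
    rw [← WithTop.coe_inj, order_eq_orderTop_of_ne_zero hR, orderTop_convErr hε]
  have := h (contP α n) (contQ α n) (contQ_ne_zero fun k hk => cqFract_ne_zero_of_le hk.le hε)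
    (sub_ne_zero.1 hR)
  rw [← convErr, hord, natDegree_contQ_succ hε] at this
  omega

lemma KK_le_coe_iff (C : ℕ) :
    KK α ≤ C ↔ ∀ n, cqFract α n ≠ 0 → (pq α (n + 1)).natDegree ≤ C := by
  rw [KK, iSup_le_iff, Subtype.forall]
  constructor
  · intro h n hn
    exact_mod_cast h (n + 1) ⟨by omega, by rw [cq_succ]; exact inv_ne_zero hn⟩
  · rintro h (_ | n) ⟨h₁, hn⟩
    · omega
    · exact_mod_cast h n (by simpa [cq_succ] using hn)

lemma KK_le_coe_iff_order_le (C : ℕ) :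
    KK α ≤ C ↔ ∀ p q : K[X], q ≠ 0 → α * emb q ≠ emb p →
      (α * emb q - emb p).order ≤ q.natDegree + C :=
  (KK_le_coe_iff C).trans ⟨fun h _ _ hq hD => order_sub_le_of_natDegree_pq_le h hq hD,
    fun h _ hε => natDegree_pq_le_of_order_le h hε⟩

lemma KK_mul_div_le (α : LaurentSeries K) {A B : K[X]} (hA : A ≠ 0) (hB : B ≠ 0) :
    KK (emb A / emb B * α) ≤ KK α + (A * B).natDegree := by
  by_cases htop : KK α = ⊤
  · simp [htop]
  obtain ⟨C, hC⟩ := ENat.ne_top_iff_exists.1 htop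
  have hα := (KK_le_coe_iff_order_le C).1 hC.ge
  rw [← hC, ← Nat.cast_add, KK_le_coe_iff_order_le]
  intro p q hq hD
  have hD₀ : emb A / emb B * α * emb q - emb p ≠ 0 := sub_ne_zero.2 hD
  have key : emb B * (emb A / emb B * α * emb q - emb p) = α * emb (A * q) - emb (B * p) := by
    field_simp [emb_ne_zero hB]
    simp only [map_mul]
    ring
  have hD' : α * emb (A * q) ≠ emb (B * p) := by
    rw [← sub_ne_zero, ← key]
    exact mul_ne_zero (emb_ne_zero hB) hD₀
  have := hα (B * p) (A * q) (mul_ne_zero hA hq) hD'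
  rw [← key, order_mul (emb_ne_zero hB) hD₀, order_emb hB, natDegree_mul hA hq] at this
  rw [natDegree_mul hA hB]
  push_cast
  omega

end PaperCF

open PaperCF in
theorem badly_approximable_mul_rational_general {K : Type*} [Field K]
    (α : LaurentSeries K) (A B : Polynomial K) (hA : A ≠ 0) (hB : B ≠ 0) :
    (KK α ≠ ⊤ ↔ KK (emb A / emb B * α) ≠ ⊤) ∧
    (KK α ≠ ⊤ →
      KK α - ((A * B).natDegree : ℕ∞) ≤ KK (emb A / emb B * α) ∧
      KK (emb A / emb B * α) ≤ KK α + ((A * B).natDegree : ℕ∞)) := by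
  set β := emb A / emb B * α with hβ
  have hβα : emb B / emb A * β = α := by
    rw [hβ]
    field_simp [emb_ne_zero hA, emb_ne_zero hB]
  have hle : KK β ≤ KK α + (A * B).natDegree := KK_mul_div_le α hA hB
  have hge : KK α ≤ KK β + (A * B).natDegree := by
    simpa [hβα, mul_comm B A] using KK_mul_div_le β hB hA
  refine ⟨⟨fun h => ne_top_of_le_ne_top ?_ hle, fun h => ne_top_of_le_ne_top ?_ hge⟩,
    fun _ => ⟨tsub_le_iff_right.2 hge, hle⟩⟩ <;>
  simp [h]

open PaperCF in
/-- For coprime non-zero `A, B ∈ K[T]` and `β = (A/B)·α`: `α` is badly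
approximable iff `β` is, and in that case
`K(α) − deg(AB) ≤ K(β) ≤ K(α) + deg(AB)`. -/
theorem badly_approximable_mul_rational {K : Type*} [Field K]
    (α : LaurentSeries K) (A B : Polynomial K) (hA : A ≠ 0) (hB : B ≠ 0)
    (hAB : IsCoprime A B) :
    (KK α ≠ ⊤ ↔ KK (emb A / emb B * α) ≠ ⊤) ∧
    (KK α ≠ ⊤ →
      KK α - ((A * B).natDegree : ℕ∞) ≤ KK (emb A / emb B * α) ∧
      KK (emb A / emb B * α) ≤ KK α + ((A * B).natDegree : ℕ∞)) :=
  badly_approximable_mul_rational_general α A B hA hB
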